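/- arXiv:1304.5762 — 10 statements merged into one kernel-verified Lean document; each statement's English description precedes it below -/
import Mathlib

section
/- Let λ, μ, ν be complex numbers of modulus 1 such that λ = aμ + bν for some nonnegative reals a, b. Then for every ε > 0 there exists a matrix E with all entries of modulus less than ε such that diag(λ,0) + E is *congruent to diag(μ,ν). -/
/-!
Put `r = √a`, `s = √b` and let `T t` be the matrix with columns `(r, s)` and `t • (s, -r)`.
Then `(T 0)ᴴ diag(μ, ν) (T 0) = diag(a μ + b ν, 0) = diag(λ, 0)`, while `det (T t) = -t (a + b)`
is nonzero for `t > 0` because `λ ≠ 0` forces `a + b > 0`. By continuity,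
`E := (T t)ᴴ diag(μ, ν) (T t) - diag(λ, 0)` is as small as we like for small `t > 0`, and
`S = (T t)⁻¹` exhibits `diag(λ, 0) + E` as *congruent to `diag(μ, ν)`.
-/

open Matrix Filter Topology

namespace Matrix

variable {n : Type*}

theorem conjTranspose_inv_mul_conjTranspose_mul_mul_inv [Fintype n] [DecidableEq n]
    {α : Type*} [CommRing α] [StarRing α] {T : Matrix n n α} (hT : IsUnit T.det)
    (D : Matrix n n α) : T⁻¹ᴴ * (Tᴴ * D * T) * T⁻¹ = D :=
  calc T⁻¹ᴴ * (Tᴴ * D * T) * T⁻¹ = (T * T⁻¹)ᴴ * D * (T * T⁻¹) := by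
        simp only [conjTranspose_mul, Matrix.mul_assoc]
    _ = D := by rw [mul_nonsing_inv _ hT, conjTranspose_one, Matrix.one_mul, Matrix.mul_one]

theorem exists_pos_forall_norm_apply_lt {m R : Type*} [Finite m] [Finite n]
    [SeminormedAddGroup R] {f : ℝ → Matrix m n R} (hf : Continuous f) (hf0 : f 0 = 0)
    {ε : ℝ} (hε : 0 < ε) : ∃ t > 0, ∀ i j, ‖f t i j‖ < ε := by
  have hsmall : ∀ i j, ∀ᶠ t in 𝓝[>] (0 : ℝ), ‖f t i j‖ < ε := fun i j => by
    have h := ((hf.matrix_elem i j).tendsto 0).norm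
    simp only [hf0, zero_apply, norm_zero] at h
    exact (h.eventually (gt_mem_nhds hε)).filter_mono nhdsWithin_le_nhds
  simp only [← eventually_all] at hsmall
  exact (hsmall.and self_mem_nhdsWithin).exists.imp fun t ht => ⟨ht.2, ht.1⟩

theorem exists_small_perturbation_congruent [Fintype n] [DecidableEq n] {𝕜 : Type*} [RCLike 𝕜]
    {T : ℝ → Matrix n n 𝕜} (hT : Continuous T) (hdet : ∀ t > 0, (T t).det ≠ 0)
    (D : Matrix n n 𝕜) {ε : ℝ} (hε : 0 < ε) :
    ∃ E : Matrix n n 𝕜, (∀ i j, ‖E i j‖ < ε) ∧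
      ∃ S : Matrix n n 𝕜, S.det ≠ 0 ∧ Sᴴ * ((T 0)ᴴ * D * T 0 + E) * S = D := by
  set f : ℝ → Matrix n n 𝕜 := fun t => (T t)ᴴ * D * T t - (T 0)ᴴ * D * T 0
  have hf : Continuous f := by fun_prop
  obtain ⟨t, ht, hsmall⟩ := exists_pos_forall_norm_apply_lt hf (sub_self _) hε
  refine ⟨f t, hsmall, (T t)⁻¹, ?_, ?_⟩
  · simpa [det_nonsing_inv] using hdet t ht
  · rw [add_sub_cancel, conjTranspose_inv_mul_conjTranspose_mul_mul_inv (hdet t ht).isUnit]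

end Matrix

def perpColumnPath (r s t : ℝ) : Matrix (Fin 2) (Fin 2) ℂ :=
  !![(r : ℂ), t * s; s, -(t * r)]

theorem continuous_perpColumnPath (r s : ℝ) : Continuous (perpColumnPath r s) := by
  unfold perpColumnPath
  fun_prop

theorem det_perpColumnPath (r s t : ℝ) :
    (perpColumnPath r s t).det = -((t * (r ^ 2 + s ^ 2) : ℝ) : ℂ) := by
  rw [perpColumnPath, det_fin_two_of]
  push_cast
  ring

theorem perpColumnPath_zero_congr (r s : ℝ) (μ ν : ℂ) :
    (perpColumnPath r s 0)ᴴ * !![μ, 0; 0, ν] * perpColumnPath r s 0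
      = !![((r ^ 2 : ℝ) : ℂ) * μ + ((s ^ 2 : ℝ) : ℂ) * ν, 0; 0, 0] := by
  ext i j
  fin_cases i <;> fin_cases j <;>
    simp [perpColumnPath, mul_apply, Fin.sum_univ_two, mul_comm, mul_left_comm, sq]

theorem arrow_diag_lambda0_to_diag_mu_nu_general (lam μ ν : ℂ)
    (hlam : ‖lam‖ = 1)
    (a b : ℝ) (ha : 0 ≤ a) (hb : 0 ≤ b) (hab : lam = (a : ℂ) * μ + (b : ℂ) * ν) :
    ∀ ε : ℝ, 0 < ε → ∃ E : Matrix (Fin 2) (Fin 2) ℂ,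
      (∀ i j, ‖E i j‖ < ε) ∧
      ∃ S : Matrix (Fin 2) (Fin 2) ℂ, S.det ≠ 0 ∧
        Sᴴ * (!![lam, 0; 0, 0] + E) * S = !![μ, 0; 0, ν] := by
  intro ε hε
  have hab_pos : 0 < a + b := by
    by_contra! h
    obtain ⟨rfl, rfl⟩ : a = 0 ∧ b = 0 := ⟨by linarith, by linarith⟩
    simp [hab] at hlam
  have hdet : ∀ t > 0, (perpColumnPath √a √b t).det ≠ 0 := fun t ht => by
    rw [det_perpColumnPath, Real.sq_sqrt ha, Real.sq_sqrt hb]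
    exact neg_ne_zero.mpr (Complex.ofReal_ne_zero.mpr (mul_pos ht hab_pos).ne')
  have hlam_eq : !![lam, 0; 0, 0]
      = (perpColumnPath √a √b 0)ᴴ * !![μ, 0; 0, ν] * perpColumnPath √a √b 0 := by
    rw [perpColumnPath_zero_congr, Real.sq_sqrt ha, Real.sq_sqrt hb, hab]
  rw [hlam_eq]
  exact exists_small_perturbation_congruent (continuous_perpColumnPath _ _) hdet _ hε

theorem arrow_diag_lambda0_to_diag_mu_nu (lam μ ν : ℂ)
    (hlam : ‖lam‖ = 1) (hμ : ‖μ‖ = 1) (hν : ‖ν‖ = 1)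
    (a b : ℝ) (ha : 0 ≤ a) (hb : 0 ≤ b) (hab : lam = (a : ℂ) * μ + (b : ℂ) * ν) :
    ∀ ε : ℝ, 0 < ε → ∃ E : Matrix (Fin 2) (Fin 2) ℂ,
      (∀ i j, ‖E i j‖ < ε) ∧
      ∃ S : Matrix (Fin 2) (Fin 2) ℂ, S.det ≠ 0 ∧
        Sᴴ * (!![lam, 0; 0, 0] + E) * S = !![μ, 0; 0, ν] :=
  arrow_diag_lambda0_to_diag_mu_nu_general lam μ ν hlam a b ha hb hab
end

section
/- Let λ, μ, ν be unimodular complex numbers. If for every ε > 0 there exists a matrix E with all entries of modulus less than ε such that diag(λ,0) + E is *congruent to diag(μ,ν), then λ = aμ + bν for some nonnegative real numbers a and b. -/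
/-!
If `Sᴴ A S = diag(μ, ν)` then `A = Tᴴ diag(μ, ν) T` with `T = S⁻¹`, so
`A₀₀ = |T₀₀|² μ + |T₁₀|² ν` lies in the cone spanned by `μ` and `ν`. Hence `λ` is a limit of the
points `λ + E₀₀` of that cone, and the cone is closed: for independent `μ, ν` it is the image of
the closed quadrant under a closed embedding, and otherwise it is the union of the rays through
`μ` and `ν`.
-/

open Matrix

namespace PointedCone

variable {E : Type*} [AddCommGroup E] [Module ℝ E]

theorem mem_hull_pair {u v x : E} :
    x ∈ hull ℝ {u, v} ↔ ∃ a b : ℝ, 0 ≤ a ∧ 0 ≤ b ∧ a • u + b • v = x := by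
  rw [hull, Submodule.mem_span_pair]
  constructor
  · rintro ⟨a, b, rfl⟩
    exact ⟨a, b, a.2, b.2, rfl⟩
  · rintro ⟨a, b, ha, hb, rfl⟩
    exact ⟨⟨a, ha⟩, ⟨b, hb⟩, rfl⟩

theorem coe_hull_singleton (u : E) :
    (hull ℝ {u} : Set E) = (fun t : ℝ => t • u) '' Set.Ici 0 := by
  ext x
  simp only [SetLike.mem_coe, hull, Submodule.mem_span_singleton, Set.mem_image, Set.mem_Ici]
  constructor
  · rintro ⟨a, rfl⟩
    exact ⟨a, a.2, rfl⟩
  · rintro ⟨a, ha, rfl⟩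
    exact ⟨⟨a, ha⟩, rfl⟩

theorem coe_hull_pair_of_not_linearIndependent {u v : E} (h : ¬LinearIndependent ℝ ![u, v]) :
    (hull ℝ {u, v} : Set E) = (hull ℝ {u} : Set E) ∪ (hull ℝ {v} : Set E) := by
  refine subset_antisymm ?_ (Set.union_subset (Submodule.span_mono (by simp))
    (Submodule.span_mono (by simp)))
  rintro x hx
  obtain ⟨a, b, ha, hb, rfl⟩ := mem_hull_pair.1 hx
  by_cases hu : u = 0
  · rw [hu, smul_zero, zero_add]
    exact Or.inr (smul_mem _ hb (subset_hull rfl))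
  obtain ⟨c, rfl⟩ : ∃ c : ℝ, c • u = v := by
    simpa [LinearIndependent.pair_iff' hu] using h
  rw [smul_smul, ← add_smul]
  rcases le_or_gt 0 (a + b * c) with hpos | hneg
  · exact Or.inl (smul_mem _ hpos (subset_hull rfl))
  · have hc : c < 0 := by nlinarith
    refine Or.inr ?_
    rw [show (a + b * c) • u = ((a + b * c) / c) • c • u by
      rw [smul_smul, div_mul_cancel₀ _ hc.ne]]
    exact smul_mem _ (div_nonneg_of_nonpos hneg.le hc.le) (subset_hull rfl)

variable [TopologicalSpace E] [IsTopologicalAddGroup E] [ContinuousSMul ℝ E] [T2Space E]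

theorem isClosed_hull_singleton (u : E) : IsClosed (hull ℝ {u} : Set E) := by
  rw [coe_hull_singleton]
  exact isClosedMap_smul_left u _ isClosed_Ici

theorem isClosed_hull_pair (u v : E) : IsClosed (hull ℝ {u, v} : Set E) := by
  by_cases huv : LinearIndependent ℝ ![u, v]
  · let L : ℝ × ℝ →ₗ[ℝ] E :=
      (LinearMap.toSpanSingleton ℝ E u).coprod (LinearMap.toSpanSingleton ℝ E v)
    have hL : LinearMap.ker L = ⊥ := by
      refine LinearMap.ker_eq_bot'.2 fun p hp => ?_
      obtain ⟨h1, h2⟩ := LinearIndependent.pair_iff.1 huv p.1 p.2 hp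
      exact Prod.ext h1 h2
    have hcone : (hull ℝ {u, v} : Set E) = L '' (Set.Ici 0 ×ˢ Set.Ici 0) := by
      ext x
      simp [mem_hull_pair, L, and_assoc]
    rw [hcone]
    exact (LinearMap.isClosedEmbedding_of_injective hL).isClosedMap _
      (isClosed_Ici.prod isClosed_Ici)
  · rw [coe_hull_pair_of_not_linearIndependent huv]
    exact (isClosed_hull_singleton u).union (isClosed_hull_singleton v)

end PointedCone

namespace Matrix

variable {n 𝕜 : Type*} [Fintype n] [DecidableEq n] [RCLike 𝕜]

theorem conjTranspose_mul_diagonal_mul_apply_self (T : Matrix n n 𝕜) (d : n → 𝕜) (i : n) :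
    (Tᴴ * diagonal d * T) i i = ∑ k, (‖T k i‖ ^ 2 : ℝ) • d k := by
  rw [mul_apply]
  simp only [mul_diagonal, conjTranspose_apply]
  refine Finset.sum_congr rfl fun k _ => ?_
  rw [RCLike.real_smul_eq_coe_mul, RCLike.ofReal_pow, ← RCLike.conj_mul, RCLike.star_def]
  ring

theorem apply_self_mem_hull_of_conjTranspose_mul_mul_eq_diagonal {A S : Matrix n n 𝕜}
    {d : n → 𝕜} (hS : IsUnit S.det) (h : Sᴴ * A * S = diagonal d) (i : n) :
    A i i ∈ PointedCone.hull ℝ (Set.range d) := by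
  have hSH : IsUnit Sᴴ.det := by simpa [det_conjTranspose] using hS
  have hA : A = (S⁻¹)ᴴ * diagonal d * S⁻¹ := by
    rw [← h, conjTranspose_nonsing_inv, Matrix.mul_assoc, mul_nonsing_inv_cancel_right _ _ hS,
      nonsing_inv_mul_cancel_left _ _ hSH]
  rw [hA, conjTranspose_mul_diagonal_mul_apply_self]
  exact Submodule.sum_mem _ fun k _ =>
    PointedCone.smul_mem _ (sq_nonneg _) (PointedCone.subset_hull (Set.mem_range_self k))

end Matrix

theorem arrow_diag_lambda0_to_diag_mu_nu_necessary_general (lam μ ν : ℂ)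
    (h : ∀ ε : ℝ, 0 < ε → ∃ E : Matrix (Fin 2) (Fin 2) ℂ,
      (∀ i j, ‖E i j‖ < ε) ∧
      ∃ S : Matrix (Fin 2) (Fin 2) ℂ, S.det ≠ 0 ∧
        Sᴴ * (!![lam, 0; 0, 0] + E) * S = !![μ, 0; 0, ν]) :
    ∃ a b : ℝ, 0 ≤ a ∧ 0 ≤ b ∧ lam = (a : ℂ) * μ + (b : ℂ) * ν := by
  have hlam : lam ∈ closure (PointedCone.hull ℝ {μ, ν} : Set ℂ) := by
    refine Metric.mem_closure_iff.2 fun ε hε => ?_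
    obtain ⟨E, hE, S, hS, hSE⟩ := h ε hε
    refine ⟨lam + E 0 0, ?_, (dist_self_add_right _ _).trans_lt (hE 0 0)⟩
    rw [← diagonal_vec2 μ ν] at hSE
    have h00 :=
      apply_self_mem_hull_of_conjTranspose_mul_mul_eq_diagonal (isUnit_iff_ne_zero.2 hS) hSE 0
    rw [range_cons_cons_empty] at h00
    simpa using h00
  obtain ⟨a, b, ha, hb, hab⟩ :=
    PointedCone.mem_hull_pair.1 ((PointedCone.isClosed_hull_pair μ ν).closure_subset hlam)
  exact ⟨a, b, ha, hb, by simpa [Complex.real_smul] using hab.symm⟩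

theorem arrow_diag_lambda0_to_diag_mu_nu_necessary (lam μ ν : ℂ)
    (hlam : ‖lam‖ = 1) (hμ : ‖μ‖ = 1) (hν : ‖ν‖ = 1)
    (h : ∀ ε : ℝ, 0 < ε → ∃ E : Matrix (Fin 2) (Fin 2) ℂ,
      (∀ i j, ‖E i j‖ < ε) ∧
      ∃ S : Matrix (Fin 2) (Fin 2) ℂ, S.det ≠ 0 ∧
        Sᴴ * (!![lam, 0; 0, 0] + E) * S = !![μ, 0; 0, ν]) :
    ∃ a b : ℝ, 0 ≤ a ∧ 0 ≤ b ∧ lam = (a : ℂ) * μ + (b : ℂ) * ν :=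
  arrow_diag_lambda0_to_diag_mu_nu_necessary_general lam μ ν h
end

section
/- Let λ and σ be complex numbers with |λ| = 1 and |σ| < 1. Then there exist complex numbers x and z such that \bar{x} z + \bar{z} σ x = λ. -/
open ComplexConjugate

/-- `z ↦ z + σ z̄` is an `ℝ`-linear map whose determinant is `1 - ‖σ‖²`; solving the system
in `z` and `z̄` gives the explicit preimage below. -/
theorem RCLike.exists_add_mul_conj_eq {𝕜 : Type*} [RCLike 𝕜] {σ : 𝕜} (hσ : ‖σ‖ ≠ 1) (w : 𝕜) :
    ∃ z : 𝕜, z + σ * conj z = w := by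
  have hd : (1 - ‖σ‖ ^ 2 : 𝕜) ≠ 0 := by
    have : ‖σ‖ ^ 2 ≠ 1 := (pow_eq_one_iff_of_nonneg (norm_nonneg σ) two_ne_zero).not.mpr hσ
    exact_mod_cast sub_ne_zero.mpr this.symm
  refine ⟨(w - σ * conj w) / (1 - ‖σ‖ ^ 2), ?_⟩
  have hconj : conj σ * σ = (‖σ‖ ^ 2 : 𝕜) := by rw [mul_comm, RCLike.mul_conj]
  simp only [map_div₀, map_sub, map_mul, map_one, RCLike.conj_conj, map_pow, RCLike.conj_ofReal]
  field_simp
  linear_combination (-w) * hconj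

theorem exists_xz_solution_general (lam σ : ℂ) (hσ : ‖σ‖ < 1) :
    ∃ x z : ℂ, (starRingEnd ℂ) x * z + (starRingEnd ℂ) z * σ * x = lam := by
  obtain ⟨z, hz⟩ := RCLike.exists_add_mul_conj_eq hσ.ne lam
  exact ⟨1, z, by rw [← hz]; simp only [map_one, one_mul, mul_one]; ring⟩

theorem exists_xz_solution (lam σ : ℂ) (hlam : ‖lam‖ = 1) (hσ : ‖σ‖ < 1) :
    ∃ x z : ℂ, (starRingEnd ℂ) x * z + (starRingEnd ℂ) z * σ * x = lam :=
  exists_xz_solution_general lam σ hσ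
end

section
/- Let λ, τ be unimodular complex numbers. If for every ε > 0 there is a 2×2 matrix E with entries of modulus less than ε such that diag(λ,0) + E is *congruent to τ·[[0,1],[1,i]], then Im(λ \bar{τ}) ≥ 0. -/
/-!
If `Sᴴ (A + E) S = τ B` with `B = !![0, 1; 1, i]`, then with `T = S⁻¹` and `v` the first column
of `T`, the corner entry is `(A + E) 0 0 = τ · v* B v`. The real part of `B` is Hermitian and its
imaginary part is `diag(0, 1) ≥ 0`, so `Im (v* B v) = |v 1|² ≥ 0`, whence
`Im ((λ + E 0 0) τ̄) = |τ|² Im (v* B v) ≥ 0`. The perturbation costs at most `‖E 0 0‖ ‖τ‖ < ε ‖τ‖`,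
and `ε → 0` gives `Im (λ τ̄) ≥ 0`.
-/

open Matrix

namespace Matrix

variable {n α : Type*} [Fintype n]

lemma conjTranspose_mul_mul_apply_self [CommSemiring α] [StarRing α] (T N : Matrix n n α) (i : n) :
    (Tᴴ * N * T) i i = star (fun k => T k i) ⬝ᵥ N *ᵥ fun k => T k i := by
  simp only [mul_apply, dotProduct, mulVec, conjTranspose_apply, Pi.star_apply, Finset.mul_sum,
    Finset.sum_mul]
  rw [Finset.sum_comm]
  simp only [mul_assoc]

lemma eq_conjTranspose_inv_mul_mul_inv_of_conjTranspose_mul_mul_eq [DecidableEq n] {K : Type*}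
    [Field K] [StarRing K] {S M N : Matrix n n K} (hS : S.det ≠ 0) (h : Sᴴ * M * S = N) :
    M = (S⁻¹)ᴴ * N * S⁻¹ := by
  have hSH : IsUnit Sᴴ.det := by simpa [det_conjTranspose] using hS
  rw [← h, conjTranspose_nonsing_inv, Matrix.mul_assoc, Matrix.mul_assoc,
    mul_nonsing_inv _ hS.isUnit, Matrix.mul_one, ← Matrix.mul_assoc, nonsing_inv_mul _ hSH,
    Matrix.one_mul]

end Matrix

lemma im_star_dotProduct_mulVec_eq_normSq (v : Fin 2 → ℂ) :
    (star v ⬝ᵥ !![0, 1; 1, Complex.I] *ᵥ v).im = Complex.normSq (v 1) := by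
  simp [dotProduct, mulVec, Fin.sum_univ_two, Complex.normSq_apply]
  ring

lemma im_apply_mul_conj_nonneg_of_congr {M S : Matrix (Fin 2) (Fin 2) ℂ} {τ : ℂ} (hS : S.det ≠ 0)
    (h : Sᴴ * M * S = τ • !![0, 1; 1, Complex.I]) (i : Fin 2) :
    0 ≤ (M i i * starRingEnd ℂ τ).im := by
  set v : Fin 2 → ℂ := fun k => S⁻¹ k i
  have hM : M i i = τ * (star v ⬝ᵥ !![0, 1; 1, Complex.I] *ᵥ v) := by
    rw [eq_conjTranspose_inv_mul_mul_inv_of_conjTranspose_mul_mul_eq hS h,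
      conjTranspose_mul_mul_apply_self, smul_mulVec, dotProduct_smul, smul_eq_mul]
  rw [hM, mul_right_comm, Complex.mul_conj, Complex.im_ofReal_mul,
    im_star_dotProduct_mulVec_eq_normSq]
  exact mul_nonneg (Complex.normSq_nonneg τ) (Complex.normSq_nonneg _)

lemma nonneg_of_forall_pos_nonneg_add_mul {a b : ℝ} (h : ∀ ε > 0, 0 ≤ a + ε * b) : 0 ≤ a := by
  have hlim : Filter.Tendsto (fun ε : ℝ => a + ε * b) (nhdsWithin 0 (Set.Ioi 0)) (nhds a) :=
    tendsto_nhdsWithin_of_tendsto_nhds ((Continuous.tendsto' (by fun_prop) 0 _ (by simp)))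
  exact ge_of_tendsto hlim (eventually_nhdsWithin_of_forall h)

theorem arrow_diag_lambda0_to_tau_block_necessary_general (lam τ : ℂ)
    (h : ∀ ε : ℝ, 0 < ε → ∃ E : Matrix (Fin 2) (Fin 2) ℂ,
      (∀ i j, ‖E i j‖ < ε) ∧
      ∃ S : Matrix (Fin 2) (Fin 2) ℂ, S.det ≠ 0 ∧
        Sᴴ * (!![lam, 0; 0, 0] + E) * S = τ • !![0, 1; 1, Complex.I]) :
    0 ≤ (lam * (starRingEnd ℂ) τ).im := by
  refine nonneg_of_forall_pos_nonneg_add_mul (b := ‖τ‖) fun ε hε => ?_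
  obtain ⟨E, hE, S, hS, hcongr⟩ := h ε hε
  have hperturbed := im_apply_mul_conj_nonneg_of_congr hS hcongr 0
  simp only [Matrix.add_apply, of_apply, cons_val', cons_val_zero, empty_val', cons_val_fin_one,
    add_mul, Complex.add_im] at hperturbed
  have herr : (E 0 0 * starRingEnd ℂ τ).im ≤ ε * ‖τ‖ := calc
    (E 0 0 * starRingEnd ℂ τ).im ≤ ‖E 0 0 * starRingEnd ℂ τ‖ :=
      (le_abs_self _).trans (Complex.abs_im_le_norm _)
    _ = ‖E 0 0‖ * ‖τ‖ := by rw [norm_mul, Complex.norm_conj]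
    _ ≤ ε * ‖τ‖ := by gcongr; exact (hE 0 0).le
  linarith

theorem arrow_diag_lambda0_to_tau_block_necessary (lam τ : ℂ)
    (hlam : ‖lam‖ = 1) (hτ : ‖τ‖ = 1)
    (h : ∀ ε : ℝ, 0 < ε → ∃ E : Matrix (Fin 2) (Fin 2) ℂ,
      (∀ i j, ‖E i j‖ < ε) ∧
      ∃ S : Matrix (Fin 2) (Fin 2) ℂ, S.det ≠ 0 ∧
        Sᴴ * (!![lam, 0; 0, 0] + E) * S = τ • !![0, 1; 1, Complex.I]) :
    0 ≤ (lam * (starRingEnd ℂ) τ).im :=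
  arrow_diag_lambda0_to_tau_block_necessary_general lam τ h
end

section
/- Let λ, τ be unimodular complex numbers with Im(λ \bar{τ}) ≥ 0. Then for every ε > 0 there exists a 2×2 matrix E with all entries of modulus less than ε such that diag(λ,0) + E is *congruent to τ·[[0,1],[1,i]]. -/
/-!
Write `N = !![0, 1; 1, i]`. For real `a, b` and `T c = !![a, c; b, 0]`, the matrix `(T c)ᴴ (τ N) (T c)`
tends to `!![τ (2ab + i b²), 0; 0, 0]` as `c → 0`, and `T c` is invertible for `c ≠ 0` (when `b ≠ 0`).
Since `2ab + i b²` takes every value in the open upper half-plane, `!![τ z, 0; 0, 0]` lies in the closure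
of the *congruence class of `τ N` whenever `Im z ≥ 0`; take `z = λ τ̄`, so that `τ z = λ`.
-/

open Matrix Topology ComplexConjugate

namespace Matrix

theorem exists_forall_norm_sub_lt_of_mem_closure {m n R : Type*} [Finite m] [Finite n]
    [SeminormedAddCommGroup R] {s : Set (Matrix m n R)} {A : Matrix m n R} (hA : A ∈ closure s)
    {ε : ℝ} (hε : 0 < ε) : ∃ B ∈ s, ∀ i j, ‖B i j - A i j‖ < ε := by
  have hU : IsOpen {B : Matrix m n R | ∀ i j, ‖B i j - A i j‖ < ε} := by
    simp only [Set.ofPred_forall]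
    exact isOpen_iInter_of_finite fun i => isOpen_iInter_of_finite fun j =>
      isOpen_lt (by fun_prop) continuous_const
  obtain ⟨B, hB, hBs⟩ := mem_closure_iff.1 hA _ hU (by simpa using fun _ _ => hε)
  exact ⟨B, hBs, hB⟩

variable {n K : Type*} [Fintype n] [DecidableEq n] [Field K] [StarRing K]

def congruenceClass (M : Matrix n n K) : Set (Matrix n n K) :=
  {B | ∃ S : Matrix n n K, S.det ≠ 0 ∧ Sᴴ * B * S = M}

theorem conjTranspose_mul_mul_mem_congruenceClass (M : Matrix n n K) {T : Matrix n n K}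
    (hT : T.det ≠ 0) : Tᴴ * M * T ∈ congruenceClass M := by
  have hT' : IsUnit T.det := hT.isUnit
  refine ⟨T⁻¹, by simpa [det_nonsing_inv] using hT, ?_⟩
  rw [conjTranspose_nonsing_inv, Matrix.mul_assoc, Matrix.mul_assoc, mul_nonsing_inv _ hT',
    Matrix.mul_one, ← Matrix.mul_assoc, nonsing_inv_mul _ (by simpa [det_conjTranspose] using hT'),
    Matrix.one_mul]

end Matrix

theorem diag_mem_closure_congruenceClass_of_pos_im (τ z : ℂ) (hz : 0 < z.im) :
    !![τ * z, 0; 0, 0] ∈ closure (congruenceClass (τ • !![0, 1; 1, Complex.I])) := by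
  set b := √z.im
  have hb : 0 < b := Real.sqrt_pos.2 hz
  set a := z.re / (2 * b)
  set T : ℂ → Matrix (Fin 2) (Fin 2) ℂ := fun c => !![(a : ℂ), c; (b : ℂ), 0]
  set f := fun c => (T c)ᴴ * (τ • !![0, 1; 1, Complex.I]) * T c
  have hf : Continuous f := by simp only [f, T]; fun_prop
  have hf0 : f 0 = !![τ * z, 0; 0, 0] := by
    have hz' : z = (2 * a * b : ℝ) + (b ^ 2 : ℝ) * Complex.I := by
      have hab : 2 * a * b = z.re := by simp only [a]; field_simp
      rw [hab, Real.sq_sqrt hz.le, Complex.re_add_im]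
    rw [hz']
    ext i j
    fin_cases i <;> fin_cases j <;> simp [f, T, mul_apply, Fin.sum_univ_two]
    ring
  have hdet : ∀ c ≠ 0, (T c).det ≠ 0 := fun c hc => by
    simp [T, det_fin_two_of, hb.ne', hc]
  exact mem_closure_of_tendsto (b := 𝓝[≠] 0) (hf0 ▸ hf.tendsto 0 |>.mono_left nhdsWithin_le_nhds)
    (eventually_nhdsWithin_of_forall fun c hc =>
      conjTranspose_mul_mul_mem_congruenceClass _ (hdet c hc))

theorem diag_mem_closure_congruenceClass_of_nonneg_im (τ z : ℂ) (hz : 0 ≤ z.im) :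
    !![τ * z, 0; 0, 0] ∈ closure (congruenceClass (τ • !![0, 1; 1, Complex.I])) := by
  rw [← closure_closure]
  refine map_mem_closure (f := fun z => !![τ * z, 0; 0, 0]) (s := {w | 0 < w.im}) (by fun_prop) ?_
    fun w hw => diag_mem_closure_congruenceClass_of_pos_im τ w hw
  rwa [Complex.closure_setOfPred_lt_im]

theorem arrow_diag_lambda0_to_tau_block_sufficient_general (lam τ : ℂ)
    (hτ : ‖τ‖ = 1)
    (him : 0 ≤ (lam * (starRingEnd ℂ) τ).im) :
    ∀ ε : ℝ, 0 < ε → ∃ E : Matrix (Fin 2) (Fin 2) ℂ,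
      (∀ i j, ‖E i j‖ < ε) ∧
      ∃ S : Matrix (Fin 2) (Fin 2) ℂ, S.det ≠ 0 ∧
        Sᴴ * (!![lam, 0; 0, 0] + E) * S = τ • !![0, 1; 1, Complex.I] := by
  intro ε hε
  have hlam : τ * (lam * conj τ) = lam := by
    rw [mul_left_comm, Complex.mul_conj, Complex.normSq_eq_norm_sq, hτ]; simp
  have hD := diag_mem_closure_congruenceClass_of_nonneg_im τ _ him
  rw [hlam] at hD
  obtain ⟨B, ⟨S, hS, hSB⟩, hB⟩ := exists_forall_norm_sub_lt_of_mem_closure hD hε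
  exact ⟨B - !![lam, 0; 0, 0], hB, S, hS, by rwa [add_sub_cancel]⟩

theorem arrow_diag_lambda0_to_tau_block_sufficient (lam τ : ℂ)
    (hlam : ‖lam‖ = 1) (hτ : ‖τ‖ = 1)
    (him : 0 ≤ (lam * (starRingEnd ℂ) τ).im) :
    ∀ ε : ℝ, 0 < ε → ∃ E : Matrix (Fin 2) (Fin 2) ℂ,
      (∀ i j, ‖E i j‖ < ε) ∧
      ∃ S : Matrix (Fin 2) (Fin 2) ℂ, S.det ≠ 0 ∧
        Sᴴ * (!![lam, 0; 0, 0] + E) * S = τ • !![0, 1; 1, Complex.I] :=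
  arrow_diag_lambda0_to_tau_block_sufficient_general lam τ hτ him
end

section
/- Let λ, τ be unimodular complex numbers. If for every ε > 0 there exists a 2×2 matrix E with entries of modulus less than ε such that diag(λ,−λ) + E is *congruent to τ·[[0,1],[1,i]], then λ = τ or λ = −τ. -/
/-!
If `Sᴴ A S = B` then `det B = |det S|² det A`, so `det A * conj (det B)` is a nonnegative real.
This closed condition on `A` passes from the perturbations `D + E` to `D = diag(λ, -λ)`, giving
`0 ≤ λ² conj τ²`; for unimodular `λ, τ` this forces `λ² = τ²`.
-/

open Matrix ComplexOrder

theorem Matrix.det_mul_star_det_conjTranspose_mul_mul_nonneg {R n : Type*} [CommRing R]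
    [PartialOrder R] [StarRing R] [StarOrderedRing R] [Fintype n] [DecidableEq n]
    (A S : Matrix n n R) : 0 ≤ A.det * star (Sᴴ * A * S).det := by
  have hx := star_mul_self_nonneg (star A.det * S.det)
  rw [det_mul, det_mul, det_conjTranspose]
  convert hx using 1
  simp only [star_mul, star_star]
  ring

theorem RCLike.eq_or_eq_neg_of_norm_eq_of_sq_mul_star_sq_nonneg {K : Type*} [RCLike K] {a b : K}
    (hab : ‖a‖ = ‖b‖) (h : 0 ≤ a ^ 2 * star (b ^ 2)) : a = b ∨ a = -b := by
  rcases eq_or_ne b 0 with rfl | hb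
  · simp_all
  have hnorm : a ^ 2 * star (b ^ 2) = b ^ 2 * star (b ^ 2) := by
    rw [← RCLike.norm_of_nonneg' h, ← RCLike.norm_of_nonneg' (mul_star_self_nonneg (b ^ 2))]
    simp [hab]
  have hsq : a ^ 2 = b ^ 2 := mul_right_cancel₀ (by simpa using hb) hnorm
  exact sq_eq_sq_iff_eq_or_eq_neg.mp hsq

section
attribute [local instance] Matrix.seminormedAddCommGroup

theorem Matrix.mem_of_isClosed_of_forall_exists_entrywise_lt {m n 𝕜 : Type*} [Fintype m]
    [Fintype n] [SeminormedAddCommGroup 𝕜] {s : Set (Matrix m n 𝕜)} (hs : IsClosed s)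
    {A : Matrix m n 𝕜} (h : ∀ ε > 0, ∃ E : Matrix m n 𝕜, (∀ i j, ‖E i j‖ < ε) ∧ A + E ∈ s) :
    A ∈ s := by
  refine hs.closure_subset (Metric.mem_closure_iff.mpr fun ε hε => ?_)
  obtain ⟨E, hE, hAE⟩ := h ε hε
  exact ⟨A + E, hAE, by simpa [dist_eq_norm] using (Matrix.norm_lt_iff hε).mpr hE⟩

end

theorem arrow_diag_lambda_neg_lambda_to_tau_block_necessary (lam τ : ℂ)
    (hlam : ‖lam‖ = 1) (hτ : ‖τ‖ = 1)
    (h : ∀ ε : ℝ, 0 < ε → ∃ E : Matrix (Fin 2) (Fin 2) ℂ,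
      (∀ i j, ‖E i j‖ < ε) ∧
      ∃ S : Matrix (Fin 2) (Fin 2) ℂ, S.det ≠ 0 ∧
        Sᴴ * (!![lam, 0; 0, -lam] + E) * S = τ • !![0, 1; 1, Complex.I]) :
    lam = τ ∨ lam = -τ := by
  set B : Matrix (Fin 2) (Fin 2) ℂ := τ • !![0, 1; 1, Complex.I]
  have hclosed : IsClosed {A : Matrix (Fin 2) (Fin 2) ℂ | 0 ≤ A.det * star B.det} :=
    isClosed_le continuous_const (continuous_id.matrix_det.mul continuous_const)
  have hdiag : 0 ≤ (!![lam, 0; 0, -lam] : Matrix (Fin 2) (Fin 2) ℂ).det * star B.det := by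
    refine mem_of_isClosed_of_forall_exists_entrywise_lt hclosed fun ε hε => ?_
    obtain ⟨E, hE, S, -, hSE⟩ := h ε hε
    exact ⟨E, hE, hSE ▸ det_mul_star_det_conjTranspose_mul_mul_nonneg _ S⟩
  refine RCLike.eq_or_eq_neg_of_norm_eq_of_sq_mul_star_sq_nonneg (hlam.trans hτ.symm) ?_
  simpa [B, det_fin_two_of, sq] using hdiag
end

section
/- Let λ be unimodular, σ ∈ ℂ with |σ| < 1, and δ ∈ {1,−1}. Then there is an ε > 0 such that no matrix A with ‖A − diag(λ, δλ)‖ < ε is *congruent to [[0,1],[σ,0]]. -/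
/-!
Over `ℂ`, `tr (adj Aᴴ · A)` and `det A` both get multiplied by `det Sᴴ · det S` when `A` is
replaced by `Sᴴ A S`, so `tr (adj Aᴴ · A) · det B = det A · tr (adj Bᴴ · B)` whenever `A` and `B`
are *congruent. For `B = [[0,1],[σ,0]]` this gives `(|σ|² + 1) |det A| = |σ| |tr (adj Aᴴ · A)|`.
If `A` is close to `diag(λ, δλ)`, then `|det A| ≈ 1` and `|tr (adj Aᴴ · A)| ≲ 2`, which would force
`|σ|² + 1 ≲ 2|σ|`. But `|σ| < 1` means `(1 - |σ|)² > 0`, and this gap rules that out.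
-/

open Matrix

namespace Matrix

section Cosquare

variable {n R : Type*} [Fintype n] [DecidableEq n] [CommRing R] [StarRing R]

/-- For invertible `A` this is `det Aᴴ` times the cosquare `(Aᴴ)⁻¹ * A`, whose similarity class is a
congruence invariant of `A`. -/
def adjugateCosquare (A : Matrix n n R) : Matrix n n R := adjugate Aᴴ * A

theorem trace_adjugateCosquare_congr (A S : Matrix n n R) :
    trace (adjugateCosquare (Sᴴ * A * S)) = Sᴴ.det * S.det * trace (adjugateCosquare A) := by
  have hexpand : adjugateCosquare (Sᴴ * A * S) =
      Sᴴ.det • (adjugate S * (adjugateCosquare A * S)) := by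
    simp only [adjugateCosquare, conjTranspose_mul, conjTranspose_conjTranspose,
      adjugate_mul_distrib, Matrix.mul_assoc]
    rw [← Matrix.mul_assoc (adjugate Sᴴ), adjugate_mul, Matrix.smul_mul, Matrix.one_mul,
      Matrix.mul_smul, Matrix.mul_smul]
  rw [hexpand, trace_smul, trace_mul_comm, Matrix.mul_assoc, mul_adjugate, Matrix.mul_smul,
    Matrix.mul_one, trace_smul, smul_eq_mul, smul_eq_mul, mul_assoc]

theorem trace_adjugateCosquare_congr_mul_det (A S : Matrix n n R) :
    trace (adjugateCosquare (Sᴴ * A * S)) * A.det =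
      (Sᴴ * A * S).det * trace (adjugateCosquare A) := by
  rw [trace_adjugateCosquare_congr, det_mul, det_mul]
  ring

theorem trace_adjugateCosquare_fin_two (A : Matrix (Fin 2) (Fin 2) R) :
    trace (adjugateCosquare A) =
      star (A 1 1) * A 0 0 - star (A 1 0) * A 1 0 - star (A 0 1) * A 0 1 + star (A 0 0) * A 1 1 := by
  simp [adjugateCosquare, adjugate_fin_two, trace_fin_two, vecMul, dotProduct, Fin.sum_univ_two]
  ring

end Cosquare

section NormBounds

variable {𝕜 : Type*} [NormedField 𝕜]

theorem norm_mul_sub_norm_mul_le_norm_det_fin_two (A : Matrix (Fin 2) (Fin 2) 𝕜) :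
    ‖A 0 0‖ * ‖A 1 1‖ - ‖A 0 1‖ * ‖A 1 0‖ ≤ ‖A.det‖ := by
  rw [det_fin_two, ← norm_mul, ← norm_mul]
  exact norm_sub_norm_le _ _

theorem norm_trace_adjugateCosquare_fin_two_le [StarRing 𝕜] [NormedStarGroup 𝕜]
    (A : Matrix (Fin 2) (Fin 2) 𝕜) :
    ‖trace (adjugateCosquare A)‖ ≤ 2 * (‖A 0 0‖ * ‖A 1 1‖) + ‖A 0 1‖ ^ 2 + ‖A 1 0‖ ^ 2 := by
  rw [trace_adjugateCosquare_fin_two]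
  refine (norm_add_le _ _).trans ?_
  grw [norm_sub_le, norm_sub_le]
  simp only [norm_mul, norm_star]
  nlinarith

end NormBounds

theorem trace_adjugateCosquare_sigma_block {R : Type*} [CommRing R] [StarRing R] (σ : R) :
    trace (adjugateCosquare !![0, 1; σ, 0]) = -(σ * star σ + 1) := by
  rw [trace_adjugateCosquare_fin_two]
  simp only [of_apply, cons_val', cons_val_zero, cons_val_one, cons_val_fin_one, star_zero,
    star_one, mul_zero, mul_one, zero_sub, add_zero, neg_add_rev]
  ring

theorem norm_det_eq_of_congr_sigma_block {A S : Matrix (Fin 2) (Fin 2) ℂ} {σ : ℂ}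
    (hS : Sᴴ * A * S = !![0, 1; σ, 0]) :
    (‖σ‖ ^ 2 + 1) * ‖A.det‖ = ‖σ‖ * ‖trace (adjugateCosquare A)‖ := by
  have h := congrArg norm (trace_adjugateCosquare_congr_mul_det A S)
  have hreal : σ * star σ + 1 = ((‖σ‖ ^ 2 + 1 : ℝ) : ℂ) := by
    rw [Complex.star_def, Complex.mul_conj, Complex.normSq_eq_norm_sq]
    push_cast
    ring
  rw [hS, trace_adjugateCosquare_sigma_block, det_fin_two_of, hreal, neg_mul, norm_neg, norm_mul,
    Complex.norm_real, Real.norm_of_nonneg (by positivity)] at h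
  simpa using h

end Matrix

theorem two_mul_lt_one_add_sq_perturbed {s ε a d b c : ℝ} (hs : 0 ≤ s) (hε : 4 * ε ≤ 1 - s)
    (ha : 1 - ε ≤ a) (hd : 1 - ε ≤ d) (hb0 : 0 ≤ b) (hb : b < ε) (hc0 : 0 ≤ c) (hc : c < ε) :
    s * (2 * (a * d) + b ^ 2 + c ^ 2) < (s ^ 2 + 1) * (a * d - b * c) := by
  have hε0 : 0 < ε := hb0.trans_lt hb
  have hs1 : s ≤ 1 := by linarith
  have had : 9 / 16 ≤ a * d := by nlinarith
  have hgap : 16 * ε ^ 2 ≤ (1 - s) ^ 2 := by nlinarith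
  have hoff : s * (b ^ 2 + c ^ 2) + (s ^ 2 + 1) * (b * c) < 4 * ε ^ 2 := by
    have hb2 : b ^ 2 < ε ^ 2 := by nlinarith
    have hc2 : c ^ 2 < ε ^ 2 := by nlinarith
    have hbc : b * c < ε ^ 2 := by nlinarith
    nlinarith [mul_le_mul_of_nonneg_left hs1 hs]
  nlinarith

theorem one_sub_le_norm_of_norm_sub_lt {E : Type*} [SeminormedAddCommGroup E] {x u : E} {ε : ℝ}
    (hu : ‖u‖ = 1) (h : ‖x - u‖ < ε) : 1 - ε ≤ ‖x‖ := by
  linarith [hu ▸ norm_sub_norm_le u x, norm_sub_rev u x]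

theorem no_arrow_diag_to_sigma_block (lam σ : ℂ) (δ : ℂ)
    (hlam : ‖lam‖ = 1) (hσ : ‖σ‖ < 1) (hδ : δ = 1 ∨ δ = -1) :
    ∃ ε : ℝ, 0 < ε ∧ ∀ A : Matrix (Fin 2) (Fin 2) ℂ,
      (∀ i j, ‖(A - !![lam, 0; 0, δ * lam]) i j‖ < ε) →
      ¬ ∃ S : Matrix (Fin 2) (Fin 2) ℂ, S.det ≠ 0 ∧ Sᴴ * A * S = !![0, 1; σ, 0] := by
  refine ⟨(1 - ‖σ‖) / 4, by linarith, fun A hA ⟨S, _, hS⟩ => ?_⟩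
  have hδlam : ‖δ * lam‖ = 1 := by rcases hδ with rfl | rfl <;> simp [hlam]
  have h00 : ‖A 0 0 - lam‖ < (1 - ‖σ‖) / 4 := by simpa using hA 0 0
  have h11 : ‖A 1 1 - δ * lam‖ < (1 - ‖σ‖) / 4 := by simpa using hA 1 1
  have h01 : ‖A 0 1‖ < (1 - ‖σ‖) / 4 := by simpa using hA 0 1
  have h10 : ‖A 1 0‖ < (1 - ‖σ‖) / 4 := by simpa using hA 1 0
  have hgap := two_mul_lt_one_add_sq_perturbed (norm_nonneg σ) (by linarith)
    (one_sub_le_norm_of_norm_sub_lt hlam h00) (one_sub_le_norm_of_norm_sub_lt hδlam h11)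
    (norm_nonneg _) h01 (norm_nonneg _) h10
  have hdet := mul_le_mul_of_nonneg_left (norm_mul_sub_norm_mul_le_norm_det_fin_two A)
    (by positivity : (0 : ℝ) ≤ ‖σ‖ ^ 2 + 1)
  have htrace :=
    mul_le_mul_of_nonneg_left (norm_trace_adjugateCosquare_fin_two_le A) (norm_nonneg σ)
  linarith [norm_det_eq_of_congr_sigma_block hS]
end

section
/- Let λ, μ, ν be unimodular with μ ≠ ν and μ ≠ −ν, and δ ∈ {1,−1}. Then there is an ε > 0 such that no matrix A with ‖A − diag(λ, δλ)‖ < ε is *congruent to diag(μ,ν). -/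
/-!
For invertible `A`, the matrix `(A⁻¹)ᴴ A` only changes by similarity under *congruence, so
`trace (adjugate A * Aᴴ) ^ 2 / (det A * star (det A))` is a *congruence invariant. It equals
`(μ / ν + ν / μ) ^ 2` at `diag(μ, ν)` and `4` at `diag(λ, δλ)`; these differ because `μ² ≠ ν²`.
Clearing the denominator gives a continuous function that vanishes on the *congruence class of
`diag(μ, ν)` but not at `diag(λ, δλ)`, hence not near it either.
-/

open Matrix Topology

namespace Matrix

section CongrForm

variable {n R : Type*} [Fintype n] [DecidableEq n] [CommRing R] [StarRing R]

lemma det_conjTranspose_mul_mul (S A : Matrix n n R) :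
    det (Sᴴ * A * S) = star (det S) * det S * det A := by
  rw [det_mul, det_mul, det_conjTranspose]
  ring

lemma trace_adjugate_mul_conjTranspose_congr (S A : Matrix n n R) :
    trace (adjugate (Sᴴ * A * S) * (Sᴴ * A * S)ᴴ)
      = star (det S) * det S * trace (adjugate A * Aᴴ) := by
  have hexpand : adjugate (Sᴴ * A * S) * (Sᴴ * A * S)ᴴ
      = adjugate S * (adjugate A * ((adjugate Sᴴ * Sᴴ) * (Aᴴ * S))) := by
    simp only [adjugate_mul_distrib, conjTranspose_mul, conjTranspose_conjTranspose,
      Matrix.mul_assoc]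
  rw [hexpand, adjugate_mul, trace_mul_comm]
  simp only [Matrix.smul_mul, Matrix.mul_smul, Matrix.one_mul, Matrix.mul_assoc, mul_adjugate,
    Matrix.mul_one, trace_smul, smul_eq_mul, det_conjTranspose]
  ring

/-- For invertible `A`, `congrForm c A = 0` says that the *congruence invariant
`trace (adjugate A * Aᴴ) ^ 2 / (det A * star (det A))` takes the value `c`. -/
def congrForm (c : R) (A : Matrix n n R) : R :=
  trace (adjugate A * Aᴴ) ^ 2 - c * (det A * star (det A))

lemma congrForm_conjTranspose_mul_mul (c : R) (S A : Matrix n n R) :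
    congrForm c (Sᴴ * A * S) = (star (det S) * det S) ^ 2 * congrForm c A := by
  simp only [congrForm, trace_adjugate_mul_conjTranspose_congr, det_conjTranspose_mul_mul,
    star_mul', star_star]
  ring

lemma congrForm_fin_two_of (c a b d e : R) :
    congrForm c !![a, b; d, e]
      = (e * star a + a * star e - b * star b - d * star d) ^ 2
        - c * ((a * e - b * d) * star (a * e - b * d)) := by
  simp only [congrForm, adjugate_fin_two_of, conjTranspose_apply, det_fin_two_of, trace_fin_two,
    mul_apply, Fin.sum_univ_two, of_apply, cons_val', cons_val_zero, cons_val_fin_one,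
    cons_val_one, star_sub, star_mul']
  ring

end CongrForm

lemma congrForm_eq_zero_of_congr {n K : Type*} [Fintype n] [DecidableEq n] [Field K] [StarRing K]
    {c : K} {A B S : Matrix n n K} (hS : det S ≠ 0) (hSAS : Sᴴ * A * S = B)
    (hB : congrForm c B = 0) : congrForm c A = 0 := by
  rw [← hSAS, congrForm_conjTranspose_mul_mul] at hB
  exact (mul_eq_zero.mp hB).resolve_left (pow_ne_zero _ (mul_ne_zero (star_ne_zero.mpr hS) hS))

lemma continuous_congrForm {n R : Type*} [Fintype n] [DecidableEq n] [CommRing R] [StarRing R]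
    [TopologicalSpace R] [IsTopologicalRing R] [ContinuousStar R] (c : R) :
    Continuous (congrForm (n := n) c) := by
  unfold congrForm
  fun_prop

lemma exists_pos_forall_entry_lt_of_eventually {m n α : Type*} [Fintype m] [Fintype n]
    [NormedAddCommGroup α] {p : Matrix m n α → Prop} {B : Matrix m n α}
    (h : ∀ᶠ A in 𝓝 B, p A) : ∃ ε : ℝ, 0 < ε ∧ ∀ A, (∀ i j, ‖(A - B) i j‖ < ε) → p A := by
  let := Matrix.normedAddCommGroup (m := m) (n := n) (α := α)
  obtain ⟨ε, hε, hball⟩ := Metric.eventually_nhds_iff.mp h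
  exact ⟨ε, hε, fun A hA => hball (by rwa [dist_eq_norm, norm_lt_iff hε])⟩

lemma congrForm_diag_of_norm_eq_one (c : ℂ) {a d : ℂ} (ha : ‖a‖ = 1) (hd : ‖d‖ = 1) :
    congrForm c !![a, 0; 0, d] = (a / d + d / a) ^ 2 - c := by
  have ha0 : a ≠ 0 := by rintro rfl; simp at ha
  have hd0 : d ≠ 0 := by rintro rfl; simp at hd
  simp only [congrForm_fin_two_of, Complex.star_def, map_mul, map_zero, mul_zero, sub_zero,
    ← Complex.inv_eq_conj ha, ← Complex.inv_eq_conj hd]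
  field_simp
  ring

end Matrix

theorem no_arrow_diag_to_diag_mu_nu (lam μ ν : ℂ) (δ : ℂ)
    (hlam : ‖lam‖ = 1) (hμ : ‖μ‖ = 1) (hν : ‖ν‖ = 1)
    (hμν : μ ≠ ν) (hμν' : μ ≠ -ν) (hδ : δ = 1 ∨ δ = -1) :
    ∃ ε : ℝ, 0 < ε ∧ ∀ A : Matrix (Fin 2) (Fin 2) ℂ,
      (∀ i j, ‖(A - !![lam, 0; 0, δ * lam]) i j‖ < ε) →
      ¬ ∃ S : Matrix (Fin 2) (Fin 2) ℂ, S.det ≠ 0 ∧ Sᴴ * A * S = !![μ, 0; 0, ν] := by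
  set c := (μ / ν + ν / μ) ^ 2 with hc
  have hD : congrForm c !![μ, 0; 0, ν] = 0 := by
    rw [congrForm_diag_of_norm_eq_one c hμ hν]
    exact sub_self c
  have hB : congrForm c !![lam, 0; 0, δ * lam] ≠ 0 := by
    have hδlam : ‖δ * lam‖ = 1 := by rcases hδ with rfl | rfl <;> simpa
    have hlam0 : lam ≠ 0 := by rintro rfl; simp at hlam
    have hμ0 : μ ≠ 0 := by rintro rfl; simp at hμ
    have hν0 : ν ≠ 0 := by rintro rfl; simp at hν
    have hfour : (lam / (δ * lam) + δ * lam / lam) ^ 2 = 4 := by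
      rcases hδ with rfl | rfl <;> field_simp <;> ring
    rw [congrForm_diag_of_norm_eq_one c hlam hδlam, hfour,
      show 4 - c = -((μ - ν) * (μ + ν) / (μ * ν)) ^ 2 by rw [hc]; field_simp; ring]
    exact neg_ne_zero.mpr (pow_ne_zero _ (div_ne_zero (mul_ne_zero (sub_ne_zero.mpr hμν)
      (mt add_eq_zero_iff_eq_neg.mp hμν')) (mul_ne_zero hμ0 hν0)))
  obtain ⟨ε, hε, hnear⟩ :=
    exists_pos_forall_entry_lt_of_eventually ((continuous_congrForm c).continuousAt.eventually_ne hB)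
  exact ⟨ε, hε, fun A hA ⟨S, hS, hSAS⟩ => hnear A hA (congrForm_eq_zero_of_congr hS hSAS hD)⟩
end

section
/- If A and B are invertible n×n complex matrices that are *congruent, then (A^{-1})* A and (B^{-1})* B are similar matrices. -/
open Matrix

namespace Matrix

variable {n R : Type*} [Fintype n] [DecidableEq n] [CommRing R] [StarRing R]

/-- The *cosquare `(A⁻¹)ᴴ * A`; the junk value `A⁻¹ = 0` makes it `0` for singular `A`. -/
noncomputable def cosquare (A : Matrix n n R) : Matrix n n R := (A⁻¹)ᴴ * A

theorem cosquare_conjTranspose_mul_mul (A : Matrix n n R) {S : Matrix n n R}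
    (hS : IsUnit S.det) : cosquare (Sᴴ * A * S) = S⁻¹ * cosquare A * S := by
  have hSH : IsUnit Sᴴ.det := by rw [det_conjTranspose]; exact hS.star
  simp only [cosquare, mul_inv_rev, conjTranspose_mul, conjTranspose_nonsing_inv,
    conjTranspose_conjTranspose]
  calc S⁻¹ * Aᴴ⁻¹ * Sᴴ⁻¹ * (Sᴴ * A * S)
      = S⁻¹ * Aᴴ⁻¹ * (Sᴴ⁻¹ * Sᴴ) * (A * S) := by noncomm_ring
    _ = S⁻¹ * (Aᴴ⁻¹ * A) * S := by rw [nonsing_inv_mul _ hSH]; noncomm_ring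

end Matrix

theorem congruent_implies_cosquare_similar_general (n : ℕ) (A B : Matrix (Fin n) (Fin n) ℂ)
    (h : ∃ S : Matrix (Fin n) (Fin n) ℂ, S.det ≠ 0 ∧ Sᴴ * A * S = B) :
    ∃ T : Matrix (Fin n) (Fin n) ℂ, T.det ≠ 0 ∧
      (B⁻¹)ᴴ * B = T⁻¹ * ((A⁻¹)ᴴ * A) * T := by
  obtain ⟨S, hS, rfl⟩ := h
  exact ⟨S, hS, cosquare_conjTranspose_mul_mul A hS.isUnit⟩

theorem congruent_implies_cosquare_similar (n : ℕ) (A B : Matrix (Fin n) (Fin n) ℂ)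
    (hA : IsUnit A.det) (hB : IsUnit B.det)
    (h : ∃ S : Matrix (Fin n) (Fin n) ℂ, S.det ≠ 0 ∧ Sᴴ * A * S = B) :
    ∃ T : Matrix (Fin n) (Fin n) ℂ, T.det ≠ 0 ∧
      (B⁻¹)ᴴ * B = T⁻¹ * ((A⁻¹)ᴴ * A) * T :=
  congruent_implies_cosquare_similar_general n A B h
end

section
/- Let λ, τ be unimodular complex numbers. Then there is an ε > 0 such that no matrix A with ‖A − diag(λ,λ)‖ < ε is *congruent to τ·[[0,1],[1,i]]. -/
/-! Rotating by `conj λ` we may assume that `A` is close to the identity. Then the Hermitian part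
`A + Aᴴ` is positive definite, and *congruence preserves positive definiteness. But the Hermitian
part of any multiple of `!![0, 1; 1, i]` has a zero diagonal entry, so it is not positive
definite. -/

open Matrix

open scoped ComplexOrder

namespace Matrix

theorem conjTranspose_mul_add_conjTranspose_mul {R m n : Type*} [NonUnitalSemiring R]
    [StarRing R] [Fintype n] [Fintype m] (S : Matrix n m R) (M : Matrix n n R) :
    Sᴴ * (M + Mᴴ) * S = Sᴴ * M * S + (Sᴴ * M * S)ᴴ := by
  simp [Matrix.mul_add, Matrix.add_mul, conjTranspose_mul, Matrix.mul_assoc]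

variable {𝕜 n : Type*} [RCLike 𝕜] [Fintype n]

theorem norm_star_dotProduct_mulVec_lt {E : Matrix n n 𝕜}
    (hE : ∀ i j, ‖E i j‖ < (Fintype.card n : ℝ)⁻¹) {x : n → 𝕜} (hx : x ≠ 0) :
    ‖star x ⬝ᵥ (E *ᵥ x)‖ < ∑ i, ‖x i‖ ^ 2 := by
  set c : ℝ := (Fintype.card n : ℝ)⁻¹
  obtain ⟨k, hk⟩ := Function.ne_iff.mp hx
  have hcard : (0 : ℝ) < Fintype.card n := Nat.cast_pos.mpr (Fintype.card_pos_iff.mpr ⟨k⟩)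
  have hle : ∀ i j, ‖x i‖ * ‖E i j‖ * ‖x j‖ ≤ ‖x i‖ * c * ‖x j‖ := fun i j => by
    gcongr; exact (hE i j).le
  calc ‖star x ⬝ᵥ (E *ᵥ x)‖ ≤ ∑ i, ∑ j, ‖x i‖ * ‖E i j‖ * ‖x j‖ := by
        refine (norm_sum_le _ _).trans (Finset.sum_le_sum fun i _ => ?_)
        rw [Pi.star_apply, norm_mul, norm_star]
        refine mul_le_mul_of_nonneg_left (norm_sum_le _ _) (norm_nonneg _) |>.trans_eq ?_
        simp [Finset.mul_sum, mul_assoc]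
    _ < ∑ i, ∑ j, ‖x i‖ * c * ‖x j‖ := by
        refine Finset.sum_lt_sum (fun i _ => Finset.sum_le_sum fun j _ => hle i j)
          ⟨k, Finset.mem_univ _,
            Finset.sum_lt_sum (fun j _ => hle k j) ⟨k, Finset.mem_univ _, ?_⟩⟩
        have := norm_pos_iff.mpr hk
        gcongr; exact hE k k
    _ = c * (∑ i, ‖x i‖) ^ 2 := by
        rw [sq, Finset.sum_mul_sum, Finset.mul_sum]
        refine Finset.sum_congr rfl fun i _ => ?_
        rw [Finset.mul_sum]
        exact Finset.sum_congr rfl fun j _ => by ring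
    _ ≤ c * (Fintype.card n * ∑ i, ‖x i‖ ^ 2) := by
        gcongr; exact sq_sum_le_card_mul_sum_sq
    _ = ∑ i, ‖x i‖ ^ 2 := by rw [← mul_assoc, inv_mul_cancel₀ hcard.ne', one_mul]

variable [DecidableEq n]

theorem re_star_dotProduct_mulVec_pos_of_norm_sub_one_lt {M : Matrix n n 𝕜}
    (hM : ∀ i j, ‖(M - 1) i j‖ < (Fintype.card n : ℝ)⁻¹) {x : n → 𝕜} (hx : x ≠ 0) :
    0 < RCLike.re (star x ⬝ᵥ (M *ᵥ x)) := by
  have hself : RCLike.re (star x ⬝ᵥ x) = ∑ i, ‖x i‖ ^ 2 := by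
    simp only [dotProduct, Pi.star_apply, RCLike.star_def, RCLike.conj_mul, ← RCLike.ofReal_pow,
      map_sum, RCLike.ofReal_re]
  have hsplit : star x ⬝ᵥ (M *ᵥ x) = star x ⬝ᵥ x + star x ⬝ᵥ ((M - 1) *ᵥ x) := by
    rw [sub_mulVec, one_mulVec, dotProduct_sub, add_sub_cancel]
  rw [hsplit, map_add, hself]
  have hre := (abs_le.mp (RCLike.abs_re_le_norm (star x ⬝ᵥ ((M - 1) *ᵥ x)))).1
  linarith [norm_star_dotProduct_mulVec_lt hM hx]

theorem posDef_add_conjTranspose_of_norm_sub_one_lt {M : Matrix n n 𝕜}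
    (hM : ∀ i j, ‖(M - 1) i j‖ < (Fintype.card n : ℝ)⁻¹) : (M + Mᴴ).PosDef := by
  refine .of_dotProduct_mulVec_pos (isHermitian_add_transpose_self M) fun x hx => ?_
  have hstar : star x ⬝ᵥ (Mᴴ *ᵥ x) = star (star x ⬝ᵥ (M *ᵥ x)) := by
    rw [star_dotProduct, star_mulVec, conjTranspose_conjTranspose, dotProduct_mulVec]
  rw [add_mulVec, dotProduct_add, hstar, RCLike.star_def, RCLike.add_conj, RCLike.pos_iff]
  simp [re_star_dotProduct_mulVec_pos_of_norm_sub_one_lt hM hx]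

theorem not_posDef_add_conjTranspose_of_conjTranspose_mul_mul_apply_self_eq_zero
    {M S : Matrix n n 𝕜} (hS : S.det ≠ 0) {i : n} (h : (Sᴴ * M * S) i i = 0) :
    ¬ (M + Mᴴ).PosDef := fun hM => by
  have hinj : Function.Injective S.mulVec :=
    mulVec_injective_of_isUnit ((isUnit_iff_isUnit_det S).mpr hS.isUnit)
  have hpos := (hM.conjTranspose_mul_mul_same hinj).diag_pos (i := i)
  rw [conjTranspose_mul_add_conjTranspose_mul, add_apply, conjTranspose_apply, h, star_zero,
    add_zero] at hpos
  exact hpos.false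

end Matrix

theorem no_arrow_diag_lambda_lambda_to_tau_block_general (lam τ : ℂ)
    (hlam : ‖lam‖ = 1) :
    ∃ ε : ℝ, 0 < ε ∧ ∀ A : Matrix (Fin 2) (Fin 2) ℂ,
      (∀ i j, ‖(A - !![lam, 0; 0, lam]) i j‖ < ε) →
      ¬ ∃ S : Matrix (Fin 2) (Fin 2) ℂ, S.det ≠ 0 ∧
        Sᴴ * A * S = τ • !![0, 1; 1, Complex.I] := by
  refine ⟨1 / 2, by norm_num, fun A hA ⟨S, hS, hSAS⟩ => ?_⟩
  have hunit : starRingEnd ℂ lam * lam = 1 := by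
    rw [Complex.conj_mul', hlam]; norm_num
  have hrotate : star lam • A - 1 = star lam • (A - !![lam, 0; 0, lam]) := by
    ext i j; fin_cases i <;> fin_cases j <;> simp [mul_sub, hunit]
  have hnear : ∀ i j, ‖(star lam • A - 1) i j‖ < (Fintype.card (Fin 2) : ℝ)⁻¹ := by
    intro i j
    rw [hrotate, Matrix.smul_apply, smul_eq_mul, norm_mul, norm_star, hlam, one_mul,
      Fintype.card_fin]
    simpa [one_div] using hA i j
  refine not_posDef_add_conjTranspose_of_conjTranspose_mul_mul_apply_self_eq_zero hS (i := 0) ?_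
    (posDef_add_conjTranspose_of_norm_sub_one_lt hnear)
  rw [Matrix.mul_smul, Matrix.smul_mul, hSAS]
  simp

theorem no_arrow_diag_lambda_lambda_to_tau_block (lam τ : ℂ)
    (hlam : ‖lam‖ = 1) (hτ : ‖τ‖ = 1) :
    ∃ ε : ℝ, 0 < ε ∧ ∀ A : Matrix (Fin 2) (Fin 2) ℂ,
      (∀ i j, ‖(A - !![lam, 0; 0, lam]) i j‖ < ε) →
      ¬ ∃ S : Matrix (Fin 2) (Fin 2) ℂ, S.det ≠ 0 ∧
        Sᴴ * A * S = τ • !![0, 1; 1, Complex.I] :=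
  no_arrow_diag_lambda_lambda_to_tau_block_general lam τ hlam
end
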